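/- arXiv:2605.10169 — 9 statements merged into one kernel-verified Lean document; each statement's English description precedes it below -/
import Mathlib

section
/- Suppose f : S → ℝ is a ranking certificate for a reachability game G with target set O ⊆ S. Then the REACH player has a memoryless winning strategy, i.e., there exists a function σ from REACH-states to states with σ(s) ∈ succ(s) for all REACH-states s, such that every play starting at the initial state and conforming to σ visits the target set O. -/
/-- Soundness of ranking certificates.
A reachability game is given by a state space `S`, a partition of states into
REACH-states (`isReach s`) and SAFE-states (`¬ isReach s`), a successor relation
`succ` with nonempty successor sets, an initial state `init`, and a target set `O`.
If `f : S → ℝ` is a ranking certificate (conditions (C1), (C2), (C3)), then REACH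
has a memoryless winning strategy: a map `σ` sending each REACH-state to one of its
successors such that every play (infinite sequence starting at `init` and following
`succ`) conforming to `σ` visits `O`. -/
theorem ranking_certificate_soundness {S : Type*}
    (isReach : S → Prop) (succ : S → Set S)
    (hsucc : ∀ s, (succ s).Nonempty)
    (init : S) (O : Set S) (f : S → ℝ)
    -- (C1)
    (hC1 : f init ≥ 0)
    -- (C2)
    (hC2 : ∀ s, ¬ isReach s → s ∉ O → f s ≥ 0 →
      ∀ s' ∈ succ s, f s - 1 ≥ f s' ∧ f s' ≥ 0)
    -- (C3)
    (hC3 : ∀ s, isReach s → s ∉ O → f s ≥ 0 →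
      ∃ s' ∈ succ s, f s - 1 ≥ f s' ∧ f s' ≥ 0) :
    ∃ σ : S → S,
      (∀ s, isReach s → σ s ∈ succ s) ∧
      (∀ ρ : ℕ → S, ρ 0 = init → (∀ i, ρ (i + 1) ∈ succ (ρ i)) →
        (∀ i, isReach (ρ i) → ρ (i + 1) = σ (ρ i)) →
        ∃ n, ρ n ∈ O) := by
  classical
  -- define σ
  have hσex : ∀ s : S, ∃ s' ∈ succ s,
      (isReach s → s ∉ O → f s ≥ 0 → f s - 1 ≥ f s' ∧ f s' ≥ 0) := by
    intro s
    by_cases hr : isReach s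
    · by_cases ho : s ∈ O
      · exact ⟨(hsucc s).choose, (hsucc s).choose_spec, fun _ h => absurd ho h⟩
      · by_cases hf : f s ≥ 0
        · obtain ⟨s', hs', h1, h2⟩ := hC3 s hr ho hf
          exact ⟨s', hs', fun _ _ _ => ⟨h1, h2⟩⟩
        · exact ⟨(hsucc s).choose, (hsucc s).choose_spec, fun _ _ h => absurd h hf⟩
    · exact ⟨(hsucc s).choose, (hsucc s).choose_spec, fun h => absurd h hr⟩
  choose σ hσ1 hσ2 using hσex
  refine ⟨σ, fun s _ => hσ1 s, ?_⟩
  intro ρ h0 hstep hconf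
  by_contra hO
  push_neg at hO
  -- f (ρ n) ≥ 0 and decreases by 1 each step
  have key : ∀ n, f (ρ n) ≥ 0 ∧ f (ρ n) ≤ f init - n := by
    intro n
    induction n with
    | zero => simpa [h0] using hC1
    | succ n ih =>
      obtain ⟨hge, hle⟩ := ih
      have hstepn : f (ρ n) - 1 ≥ f (ρ (n+1)) ∧ f (ρ (n+1)) ≥ 0 := by
        by_cases hr : isReach (ρ n)
        · have := hconf n hr
          rw [this]
          exact hσ2 (ρ n) hr (hO n) hge
        · exact hC2 (ρ n) hr (hO n) hge _ (hstep n)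
      refine ⟨hstepn.2, ?_⟩
      have : f (ρ (n+1)) ≤ f (ρ n) - 1 := hstepn.1
      push_cast
      linarith
  obtain ⟨n, hn⟩ := exists_nat_gt (f init)
  have := key n
  linarith [this.1, this.2]
end

section
/- Let f : S → ℝ be a ranking certificate for a reachability game G with target set O, and let σ^f be any memoryless REACH strategy that maps each REACH-state s with f(s) ≥ 0 to a ranking successor of s with respect to f (and each REACH-state s with f(s) < 0 to an arbitrary successor). Then every play starting at the initial state and conforming to σ^f visits O within the first ⌈f(s_init)⌉ steps, i.e., there exists n ≤ ⌈f(s_init)⌉ with s_n ∈ O. -/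
/-- Quantitative soundness.
If `f` is a ranking certificate and `σf` is a memoryless REACH strategy mapping each
REACH-state `s` with `f s ≥ 0` (and `s ∉ O`, where ranking successors are defined)
to a ranking successor of `s` with respect to `f`, and arbitrary REACH-states to
arbitrary successors, then every play starting at the initial state conforming to
`σf` visits `O` within the first `⌈f init⌉` steps. -/
theorem ranking_certificate_quantitative_soundness {S : Type*}
    (isReach : S → Prop) (succ : S → Set S)
    (hsucc : ∀ s, (succ s).Nonempty)
    (init : S) (O : Set S) (f : S → ℝ)
    -- (C1)
    (hC1 : f init ≥ 0)
    -- (C2)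
    (hC2 : ∀ s, ¬ isReach s → s ∉ O → f s ≥ 0 →
      ∀ s' ∈ succ s, f s - 1 ≥ f s' ∧ f s' ≥ 0)
    -- (C3)
    (hC3 : ∀ s, isReach s → s ∉ O → f s ≥ 0 →
      ∃ s' ∈ succ s, f s - 1 ≥ f s' ∧ f s' ≥ 0)
    (σf : S → S)
    -- σf is a memoryless REACH strategy
    (hstrat : ∀ s, isReach s → σf s ∈ succ s)
    -- σf chooses a ranking successor whenever f s ≥ 0
    (hrank : ∀ s, isReach s → s ∉ O → f s ≥ 0 →
      f s - 1 ≥ f (σf s) ∧ f (σf s) ≥ 0) :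
    ∀ ρ : ℕ → S, ρ 0 = init → (∀ i, ρ (i + 1) ∈ succ (ρ i)) →
      (∀ i, isReach (ρ i) → ρ (i + 1) = σf (ρ i)) →
      ∃ n : ℕ, (n : ℤ) ≤ ⌈f init⌉ ∧ ρ n ∈ O := by
  intro ρ h0 hsuc hconf
  by_contra hcon
  push_neg at hcon
  -- key step lemma
  have step : ∀ n, ρ n ∉ O → f (ρ n) ≥ 0 → f (ρ n) - 1 ≥ f (ρ (n+1)) ∧ f (ρ (n+1)) ≥ 0 := by
    intro n hnO hf
    by_cases hr : isReach (ρ n)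
    · rw [hconf n hr]; exact hrank _ hr hnO hf
    · exact hC2 _ hr hnO hf _ (hsuc n)
  set N : ℕ := (⌈f init⌉).toNat with hN
  have hNle : (N : ℤ) ≤ ⌈f init⌉ := by
    simp [hN, Int.toNat_of_nonneg (Int.ceil_nonneg hC1)]
  have hnotO : ∀ n : ℕ, (n : ℤ) ≤ ⌈f init⌉ → ρ n ∉ O := fun n hn => hcon n hn
  have key : ∀ n : ℕ, n ≤ N → 0 ≤ f (ρ n) ∧ f (ρ n) ≤ f init - n := by
    intro n hn
    induction n with
    | zero => simp [h0, hC1]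
    | succ k ih =>
      have hk : k ≤ N := Nat.le_of_succ_le hn
      obtain ⟨h1, h2⟩ := ih hk
      have hkO : ρ k ∉ O := hnotO k (le_trans (by exact_mod_cast hk) hNle)
      obtain ⟨h3, h4⟩ := step k hkO h1
      refine ⟨h4, ?_⟩
      push_cast
      linarith
  obtain ⟨h1, h2⟩ := key N le_rfl
  have hfN : f init - N ≥ 0 := le_trans h1 h2
  have hNO : ρ N ∉ O := hnotO N hNle
  obtain ⟨h3, h4⟩ := step N hNO h1
  have hle : f init ≤ (N : ℝ) := by
    have := Int.ceil_le.mpr (le_refl (⌈f init⌉ : ℝ))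
    have h5 : f init ≤ (⌈f init⌉ : ℝ) := Int.le_ceil _
    have h6 : ((⌈f init⌉ : ℤ) : ℝ) ≤ (N : ℝ) := by
      exact_mod_cast le_of_eq (Int.toNat_of_nonneg (Int.ceil_nonneg hC1)).symm
    exact h5.trans h6
  linarith
end

section
/- Let f : S → ℝ satisfy conditions (C2) and (C3) of a ranking certificate for a reachability game G with target set O, and let σ^f be any memoryless REACH strategy mapping each REACH-state s with f(s) ≥ 0 to a ranking successor of s with respect to f. Then for every state s with f(s) ≥ 0, every infinite sequence starting at s, following the successor relation, and conforming to σ^f visits O within the first ⌈f(s)⌉ steps. -/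
/-! Along a conforming run that has not yet reached `O`, every step lowers `f` by at least `1`
while keeping it nonnegative, so after `n` such steps `0 ≤ f (ρ n) ≤ f (ρ 0) - n`. This is
impossible for `n = ⌈f (ρ 0)⌉₊ + 1`, hence `O` is visited at some step `n ≤ ⌈f (ρ 0)⌉₊`. -/

section RankingRun

variable {S : Type*} {O : Set S} {f : S → ℝ} {ρ : ℕ → S}

theorem ranking_descent_of_not_mem
    (hstep : ∀ i, ρ i ∉ O → 0 ≤ f (ρ i) → f (ρ (i + 1)) ≤ f (ρ i) - 1 ∧ 0 ≤ f (ρ (i + 1)))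
    (h0 : 0 ≤ f (ρ 0)) :
    ∀ n, (∀ i < n, ρ i ∉ O) → 0 ≤ f (ρ n) ∧ f (ρ n) ≤ f (ρ 0) - n
  | 0, _ => by simpa using h0
  | n + 1, hO => by
    obtain ⟨hn_nonneg, hn_le⟩ := ranking_descent_of_not_mem hstep h0 n fun i hi => hO i (by omega)
    obtain ⟨hdec, hnext⟩ := hstep n (hO n n.lt_succ_self) hn_nonneg
    exact ⟨hnext, by push_cast; linarith⟩

theorem exists_le_natCeil_mem_of_ranking_descent
    (hstep : ∀ i, ρ i ∉ O → 0 ≤ f (ρ i) → f (ρ (i + 1)) ≤ f (ρ i) - 1 ∧ 0 ≤ f (ρ (i + 1)))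
    (h0 : 0 ≤ f (ρ 0)) :
    ∃ n ≤ ⌈f (ρ 0)⌉₊, ρ n ∈ O := by
  by_contra! hO
  obtain ⟨hpos, hle⟩ := ranking_descent_of_not_mem hstep h0 (⌈f (ρ 0)⌉₊ + 1)
    fun i hi => hO i (by omega)
  have := Nat.le_ceil (f (ρ 0))
  push_cast at hle
  linarith

end RankingRun

theorem ranking_step_of_conforming {S : Type*} {isReach : S → Prop} {succ : S → Set S}
    {O : Set S} {f : S → ℝ} {σf : S → S}
    (hC2 : ∀ s, ¬ isReach s → s ∉ O → f s ≥ 0 →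
      ∀ s' ∈ succ s, f s - 1 ≥ f s' ∧ f s' ≥ 0)
    (hrank : ∀ s, isReach s → s ∉ O → f s ≥ 0 →
      f s - 1 ≥ f (σf s) ∧ f (σf s) ≥ 0)
    {ρ : ℕ → S} (hsucc : ∀ i, ρ (i + 1) ∈ succ (ρ i))
    (hconf : ∀ i, isReach (ρ i) → ρ (i + 1) = σf (ρ i)) (i : ℕ)
    (hO : ρ i ∉ O) (hf : 0 ≤ f (ρ i)) :
    f (ρ (i + 1)) ≤ f (ρ i) - 1 ∧ 0 ≤ f (ρ (i + 1)) := by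
  by_cases hr : isReach (ρ i)
  · rw [hconf i hr]
    exact hrank _ hr hO hf
  · exact hC2 _ hr hO hf _ (hsucc i)

theorem ranking_certificate_quantitative_from_any_state_general {S : Type*}
    (isReach : S → Prop) (succ : S → Set S)
    (O : Set S) (f : S → ℝ)
    -- (C2)
    (hC2 : ∀ s, ¬ isReach s → s ∉ O → f s ≥ 0 →
      ∀ s' ∈ succ s, f s - 1 ≥ f s' ∧ f s' ≥ 0)
    (σf : S → S)
    -- σf chooses a ranking successor whenever f s ≥ 0
    (hrank : ∀ s, isReach s → s ∉ O → f s ≥ 0 →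
      f s - 1 ≥ f (σf s) ∧ f (σf s) ≥ 0) :
    ∀ s : S, f s ≥ 0 →
      ∀ ρ : ℕ → S, ρ 0 = s → (∀ i, ρ (i + 1) ∈ succ (ρ i)) →
        (∀ i, isReach (ρ i) → ρ (i + 1) = σf (ρ i)) →
        ∃ n : ℕ, (n : ℤ) ≤ ⌈f s⌉ ∧ ρ n ∈ O := by
  rintro s hs ρ rfl hsucc hconf
  obtain ⟨n, hn, hO⟩ := exists_le_natCeil_mem_of_ranking_descent
    (ranking_step_of_conforming hC2 hrank hsucc hconf) hs
  refine ⟨n, ?_, hO⟩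
  rw [← Int.natCast_ceil_eq_ceil hs]
  exact_mod_cast hn

/-- Quantitative soundness from an arbitrary state.
If `f : S → ℝ` satisfies conditions (C2) and (C3) of a ranking certificate and
`σf` is a memoryless REACH strategy mapping each REACH-state `s` with `f s ≥ 0`
(outside the target, where ranking successors are defined) to a ranking successor
of `s` with respect to `f`, then for every state `s` with `f s ≥ 0`, every infinite
sequence starting at `s`, following the successor relation and conforming to `σf`,
visits `O` within the first `⌈f s⌉` steps. -/
theorem ranking_certificate_quantitative_from_any_state {S : Type*}
    (isReach : S → Prop) (succ : S → Set S)
    (hsucc : ∀ s, (succ s).Nonempty)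
    (O : Set S) (f : S → ℝ)
    -- (C2)
    (hC2 : ∀ s, ¬ isReach s → s ∉ O → f s ≥ 0 →
      ∀ s' ∈ succ s, f s - 1 ≥ f s' ∧ f s' ≥ 0)
    -- (C3)
    (hC3 : ∀ s, isReach s → s ∉ O → f s ≥ 0 →
      ∃ s' ∈ succ s, f s - 1 ≥ f s' ∧ f s' ≥ 0)
    (σf : S → S)
    -- σf is a memoryless REACH strategy
    (hstrat : ∀ s, isReach s → σf s ∈ succ s)
    -- σf chooses a ranking successor whenever f s ≥ 0
    (hrank : ∀ s, isReach s → s ∉ O → f s ≥ 0 →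
      f s - 1 ≥ f (σf s) ∧ f (σf s) ≥ 0) :
    ∀ s : S, f s ≥ 0 →
      ∀ ρ : ℕ → S, ρ 0 = s → (∀ i, ρ (i + 1) ∈ succ (ρ i)) →
        (∀ i, isReach (ρ i) → ρ (i + 1) = σf (ρ i)) →
        ∃ n : ℕ, (n : ℤ) ≤ ⌈f s⌉ ∧ ρ n ∈ O :=
  ranking_certificate_quantitative_from_any_state_general isReach succ O f hC2 σf hrank
end

section
/- Let G be a reachability game with target set O in which every SAFE-state has only finitely many successors, i.e., succ(s) is a finite set for every SAFE-state s. If the REACH player has a memoryless winning strategy, then there exists a ranking certificate f : S → ℝ for G. -/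
/-- `Good isReach succ σ O n s` : from `s`, following `σ` at REACH states,
`O` is reached within `n` steps no matter how SAFE resolves. -/
def Good {S : Type*} (isReach : S → Prop) (succ : S → Set S) (σ : S → S)
    (O : Set S) : ℕ → S → Prop
  | 0, s => s ∈ O
  | n + 1, s => s ∈ O ∨
      ((isReach s ∧ Good isReach succ σ O n (σ s)) ∨
       (¬ isReach s ∧ ∀ s' ∈ succ s, Good isReach succ σ O n s'))

theorem Good.mono {S : Type*} {isReach : S → Prop} {succ : S → Set S} {σ : S → S}
    {O : Set S} : ∀ {n : ℕ} {s : S}, Good isReach succ σ O n s →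
      Good isReach succ σ O (n + 1) s := by
  intro n
  induction n with
  | zero => intro s h; exact Or.inl h
  | succ n ih =>
    intro s h
    rcases h with h | ⟨hr, hg⟩ | ⟨hr, hg⟩
    · exact Or.inl h
    · exact Or.inr (Or.inl ⟨hr, ih hg⟩)
    · exact Or.inr (Or.inr ⟨hr, fun s' hs' => ih (hg s' hs')⟩)

theorem Good.le {S : Type*} {isReach : S → Prop} {succ : S → Set S} {σ : S → S}
    {O : Set S} {n m : ℕ} (hnm : n ≤ m) {s : S}
    (h : Good isReach succ σ O n s) : Good isReach succ σ O m s := by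
  induction hnm with
  | refl => exact h
  | step _ ih => exact ih.mono

/-- Completeness for finite SAFE choices.
In a reachability game where every SAFE-state has only finitely many successors,
if REACH has a memoryless winning strategy then there exists a ranking
certificate `f : S → ℝ` (satisfying (C1), (C2), (C3)). -/
theorem ranking_certificate_completeness {S : Type*}
    (isReach : S → Prop) (succ : S → Set S)
    (hsucc : ∀ s, (succ s).Nonempty)
    (init : S) (O : Set S)
    -- every SAFE-state has only finitely many successors
    (hfin : ∀ s, ¬ isReach s → (succ s).Finite)
    -- REACH has a memoryless winning strategy
    (hwin : ∃ σ : S → S,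
      (∀ s, isReach s → σ s ∈ succ s) ∧
      (∀ ρ : ℕ → S, ρ 0 = init → (∀ i, ρ (i + 1) ∈ succ (ρ i)) →
        (∀ i, isReach (ρ i) → ρ (i + 1) = σ (ρ i)) →
        ∃ n, ρ n ∈ O)) :
    ∃ f : S → ℝ,
      -- (C1)
      f init ≥ 0 ∧
      -- (C2)
      (∀ s, ¬ isReach s → s ∉ O → f s ≥ 0 →
        ∀ s' ∈ succ s, f s - 1 ≥ f s' ∧ f s' ≥ 0) ∧
      -- (C3)
      (∀ s, isReach s → s ∉ O → f s ≥ 0 →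
        ∃ s' ∈ succ s, f s - 1 ≥ f s' ∧ f s' ≥ 0) := by
  classical
  obtain ⟨σ, hσ, hplay⟩ := hwin
  set Bad : S → Prop := fun s => ∀ n, ¬ Good isReach succ σ O n s with hBad
  -- a bad state is not in O and has a bad successor (following σ at REACH states)
  have hstep : ∀ s, Bad s →
      s ∉ O ∧ ∃ s' ∈ succ s, Bad s' ∧ (isReach s → s' = σ s) := by
    intro s hs
    have hsO : s ∉ O := hs 0
    refine ⟨hsO, ?_⟩
    by_cases hr : isReach s
    · refine ⟨σ s, hσ s hr, ?_, fun _ => rfl⟩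
      intro n hn
      exact hs (n + 1) (Or.inr (Or.inl ⟨hr, hn⟩))
    · have hbadsucc : ∃ s' ∈ succ s, Bad s' := by
        by_contra hcon
        push_neg at hcon
        have hall : ∀ s' ∈ succ s, ∃ n, Good isReach succ σ O n s' := by
          intro s' hs'
          by_contra hne
          push_neg at hne
          exact hcon s' hs' hne
        choose g hg using hall
        have hfs := hfin s hr
        set N : ℕ := hfs.toFinset.sup
          (fun x => if h : x ∈ succ s then g x h else 0) with hN
        have hgood : Good isReach succ σ O (N + 1) s := by
          refine Or.inr (Or.inr ⟨hr, fun s' hs' => ?_⟩)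
          have hle : g s' hs' ≤ N := by
            have hmem : s' ∈ hfs.toFinset := hfs.mem_toFinset.mpr hs'
            have := Finset.le_sup (f := fun x => if h : x ∈ succ s then g x h else 0) hmem
            simpa [hs'] using this
          exact Good.le hle (hg s' hs')
        exact hs (N + 1) hgood
      obtain ⟨s', hs', hb⟩ := hbadsucc
      exact ⟨s', hs', hb, fun hrr => absurd hrr hr⟩
  -- init cannot be bad
  have hinit : ∃ n, Good isReach succ σ O n init := by
    by_contra hbadinit
    push_neg at hbadinit
    have hbi : Bad init := hbadinit
    have hnxt : ∀ s, ∃ s', Bad s →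
        s' ∈ succ s ∧ Bad s' ∧ (isReach s → s' = σ s) := by
      intro s
      by_cases h : Bad s
      · obtain ⟨_, s', h1, h2, h3⟩ := hstep s h
        exact ⟨s', fun _ => ⟨h1, h2, h3⟩⟩
      · exact ⟨(hsucc s).some, fun hb => absurd hb h⟩
    choose nxt hnxt using hnxt
    set ρ : ℕ → S := fun n => nxt^[n] init with hρ
    have hρ0 : ρ 0 = init := rfl
    have hρs : ∀ i, ρ (i + 1) = nxt (ρ i) := by
      intro i
      simp [hρ, Function.iterate_succ_apply']
    have hbadρ : ∀ i, Bad (ρ i) := by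
      intro i
      induction i with
      | zero => exact hbi
      | succ i ih =>
        rw [hρs i]
        exact (hnxt (ρ i) ih).2.1
    have hmove : ∀ i, ρ (i + 1) ∈ succ (ρ i) := by
      intro i; rw [hρs i]; exact (hnxt (ρ i) (hbadρ i)).1
    have hconf : ∀ i, isReach (ρ i) → ρ (i + 1) = σ (ρ i) := by
      intro i hr; rw [hρs i]; exact (hnxt (ρ i) (hbadρ i)).2.2 hr
    obtain ⟨n, hn⟩ := hplay ρ hρ0 hmove hconf
    exact (hstep (ρ n) (hbadρ n)).1 hn
  -- the ranking function
  refine ⟨fun s => if h : ∃ n, Good isReach succ σ O n s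
      then ((Nat.find h : ℕ) : ℝ) else -1, ?_, ?_, ?_⟩
  · simp only [dif_pos hinit]
    exact_mod_cast Nat.cast_nonneg _
  · intro s hr hO hf s' hs'
    beta_reduce at hf ⊢
    have hex : ∃ n, Good isReach succ σ O n s := by
      by_contra h
      rw [dif_neg h] at hf
      linarith
    rw [dif_pos hex] at hf ⊢
    have hspec := Nat.find_spec hex
    have hne : Nat.find hex ≠ 0 := by
      intro h0
      rw [h0] at hspec
      exact hO hspec
    obtain ⟨m, hm⟩ := Nat.exists_eq_succ_of_ne_zero hne
    rw [hm] at hspec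
    rcases hspec with h | ⟨hrr, _⟩ | ⟨_, hg⟩
    · exact absurd h hO
    · exact absurd hrr hr
    · have hex' : ∃ n, Good isReach succ σ O n s' := ⟨m, hg s' hs'⟩
      rw [dif_pos hex']
      have hle : Nat.find hex' ≤ m := Nat.find_le (hg s' hs')
      constructor
      · rw [hm]
        push_cast
        have : (Nat.find hex' : ℝ) ≤ (m : ℝ) := by exact_mod_cast hle
        linarith
      · exact_mod_cast Nat.cast_nonneg _
  · intro s hr hO hf
    beta_reduce at hf ⊢
    have hex : ∃ n, Good isReach succ σ O n s := by
      by_contra h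
      rw [dif_neg h] at hf
      linarith
    rw [dif_pos hex] at hf
    have hspec := Nat.find_spec hex
    have hne : Nat.find hex ≠ 0 := by
      intro h0
      rw [h0] at hspec
      exact hO hspec
    obtain ⟨m, hm⟩ := Nat.exists_eq_succ_of_ne_zero hne
    rw [hm] at hspec
    rcases hspec with h | ⟨_, hg⟩ | ⟨hrr, _⟩
    · exact absurd h hO
    · refine ⟨σ s, hσ s hr, ?_⟩
      have hex' : ∃ n, Good isReach succ σ O n (σ s) := ⟨m, hg⟩
      rw [dif_pos hex, dif_pos hex']
      have hle : Nat.find hex' ≤ m := Nat.find_le hg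
      constructor
      · rw [hm]
        push_cast
        have : (Nat.find hex' : ℝ) ≤ (m : ℝ) := by exact_mod_cast hle
        linarith
      · exact_mod_cast Nat.cast_nonneg _
    · exact absurd hr hrr
end

section
/- The decrement game admits no ranking certificate. Concretely: there exist no real number c and no function g : ℝ → ℝ such that (i) c ≥ 0; (ii) for every x ∈ ℝ, c − 1 ≥ g(x) and g(x) ≥ 0; and (iii) for every x ∈ ℝ with x ≥ 0 and g(x) ≥ 0, g(x) − 1 ≥ g(x − 1) and g(x − 1) ≥ 0. (Here c plays the role of the certificate value at the SAFE initial state and g(x) its value at the REACH-state (R, x).) -/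
/-- The decrement game admits no ranking certificate.
There exist no real number `c` (the certificate value at the SAFE initial state)
and no function `g : ℝ → ℝ` (the certificate values at the REACH-states `(R, x)`)
such that (i) `c ≥ 0`; (ii) for every `x`, `c - 1 ≥ g x` and `g x ≥ 0`; and
(iii) for every `x ≥ 0` with `g x ≥ 0`, `g x - 1 ≥ g (x - 1)` and `g (x - 1) ≥ 0`. -/
theorem decrement_game_no_ranking_certificate :
    ¬ ∃ (c : ℝ) (g : ℝ → ℝ),
      c ≥ 0 ∧
      (∀ x : ℝ, c - 1 ≥ g x ∧ g x ≥ 0) ∧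
      (∀ x : ℝ, x ≥ 0 → g x ≥ 0 → g x - 1 ≥ g (x - 1) ∧ g (x - 1) ≥ 0) := by
  rintro ⟨c, g, hc, h2, h3⟩
  have key : ∀ n : ℕ, g n ≥ n := by
    intro n
    induction n with
    | zero => simpa using (h2 0).2
    | succ n ih =>
      have hx : ((n : ℝ) + 1) ≥ 0 := by positivity
      have := (h3 ((n : ℝ) + 1) hx (h2 _).2).1
      push_cast
      simp only [add_sub_cancel_right] at this
      linarith
  have h := key (⌈c⌉₊ + 1)
  have h' := (h2 ((⌈c⌉₊ : ℝ) + 1)).1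
  have : c ≤ ⌈c⌉₊ := Nat.le_ceil c
  push_cast at h
  linarith
end

section
/- In the leak game, the REACH player has a winning strategy: every play from the initial state visits the target set. Concretely, if SAFE chooses x = 0 the target is reached immediately, and if SAFE chooses x ∈ (0, 1] then the values y_n = 1 − n·x satisfy y_n < 0 for some natural number n (any n > 1/x), so the play reaches a state with y < 0. -/
/-- States of the leak game: the SAFE initial state, the terminal target state
(reached when SAFE chooses `x = 0`), and the states `(x, y)`. -/
inductive LeakState : Type
  | init : LeakState
  | term : LeakState
  | st (x y : ℝ) : LeakState

/-- Successor relation of the leak game: the successors of the initial SAFE state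
are the terminal target state (SAFE's choice `x = 0`) and the REACH-states `(x, 1)`
for every `x ∈ (0, 1]`; each state `(x, y)` has the unique successor `(x, y - x)`;
the terminal state loops. -/
def leakSucc : LeakState → Set LeakState
  | .init => {LeakState.term} ∪ {s | ∃ x ∈ Set.Ioc (0 : ℝ) 1, s = LeakState.st x 1}
  | .term => {LeakState.term}
  | .st x y => {LeakState.st x (y - x)}

/-- Target set of the leak game: the terminal state together with all states
`(x, y)` with `y < 0`. -/
def leakTarget : Set LeakState :=
  {LeakState.term} ∪ {s | ∃ x y : ℝ, s = LeakState.st x y ∧ y < 0}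

/-- In the leak game, REACH has a winning strategy: every play from
the initial state visits the target set. Concretely, if SAFE chooses `x = 0` the
target is reached immediately, and if SAFE chooses `x ∈ (0, 1]` then the values
`y_n = 1 - n·x` satisfy `y_n < 0` for some natural number `n` (any `n > 1/x`). -/
theorem leak_game_reach_wins :
    -- for every x ∈ (0,1], some y_n = 1 - n·x is negative (any n > 1/x works)
    (∀ x ∈ Set.Ioc (0 : ℝ) 1, ∀ n : ℕ, (n : ℝ) > 1 / x → 1 - (n : ℝ) * x < 0) ∧
    (∀ x ∈ Set.Ioc (0 : ℝ) 1, ∃ n : ℕ, 1 - (n : ℝ) * x < 0) ∧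
    -- every play from the initial state visits the target set
    (∀ ρ : ℕ → LeakState, ρ 0 = LeakState.init →
      (∀ i, ρ (i + 1) ∈ leakSucc (ρ i)) →
      ∃ n, ρ n ∈ leakTarget) := by
  have h1 : ∀ x ∈ Set.Ioc (0 : ℝ) 1, ∀ n : ℕ, (n : ℝ) > 1 / x → 1 - (n : ℝ) * x < 0 := by
    intro x hx n hn
    have hx0 : 0 < x := hx.1
    have : 1 / x * x < (n : ℝ) * x := by
      exact mul_lt_mul_of_pos_right hn hx0
    rw [one_div_mul_cancel hx0.ne'] at this
    linarith
  have h2 : ∀ x ∈ Set.Ioc (0 : ℝ) 1, ∃ n : ℕ, 1 - (n : ℝ) * x < 0 := by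
    intro x hx
    obtain ⟨n, hn⟩ := exists_nat_gt (1 / x)
    exact ⟨n, h1 x hx n hn⟩
  refine ⟨h1, h2, ?_⟩
  intro ρ h0 hsucc
  have h01 := hsucc 0
  rw [h0] at h01
  rcases h01 with h | ⟨x, hx, hst⟩
  · exact ⟨1, Or.inl h⟩
  · have key : ∀ n : ℕ, ρ (n + 1) = LeakState.st x (1 - (n : ℝ) * x) := by
      intro n
      induction n with
      | zero => simpa using hst
      | succ k ih =>
        have := hsucc (k + 1)
        rw [ih] at this
        simp only [leakSucc, Set.mem_singleton_iff] at this
        rw [this]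
        push_cast
        ring_nf
    obtain ⟨n, hn⟩ := h2 x hx
    exact ⟨n + 1, Or.inr ⟨x, 1 - (n : ℝ) * x, key n, hn⟩⟩
end

section
/- The leak game admits no ranking certificate, even though the successor set of its unique SAFE-state is (the image of) a compact set and REACH has a winning strategy. Concretely: there exist no real number c and no function g : (0,1] × ℝ → ℝ such that (i) c ≥ 0; (ii) for every x ∈ (0, 1], c − 1 ≥ g(x, 1) and g(x, 1) ≥ 0; and (iii) for every x ∈ (0, 1] and y ≥ 0 with g(x, y) ≥ 0, g(x, y) − 1 ≥ g(x, y − x) and g(x, y − x) ≥ 0. The reason is that for every natural number N there exists x ∈ (0, 1] (for instance x = 1/(N + 1)) with 1 − N·x ≥ 0, so no finite bound on the number of steps until the target—and hence no finite value of c—can exist. -/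
/-- The leak game admits no ranking certificate, even though SAFE's
set of choices is compact and REACH has a winning strategy. Concretely: there
exist no real number `c` (the certificate value at the SAFE initial state) and no
function `g` on `(0,1] × ℝ` (the certificate values at the states `(x, y)`,
represented as `g : ℝ → ℝ → ℝ` constrained only on `(0,1] × ℝ`) such that
(i) `c ≥ 0`; (ii) for every `x ∈ (0, 1]`, `c - 1 ≥ g x 1` and `g x 1 ≥ 0`; and
(iii) for every `x ∈ (0, 1]` and `y ≥ 0` with `g x y ≥ 0`,
`g x y - 1 ≥ g x (y - x)` and `g x (y - x) ≥ 0`.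
The reason: for every natural number `N` there exists `x ∈ (0, 1]` (for instance
`x = 1 / (N + 1)`) with `1 - N·x ≥ 0`, so no finite bound on the number of steps
until the target — and hence no finite value of `c` — can exist. -/
theorem leak_game_no_ranking_certificate :
    -- no finite step bound exists:
    (∀ N : ℕ, ∃ x ∈ Set.Ioc (0 : ℝ) 1, 1 - (N : ℝ) * x ≥ 0) ∧
    -- and no ranking certificate exists:
    ¬ ∃ (c : ℝ) (g : ℝ → ℝ → ℝ),
      c ≥ 0 ∧
      (∀ x ∈ Set.Ioc (0 : ℝ) 1, c - 1 ≥ g x 1 ∧ g x 1 ≥ 0) ∧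
      (∀ x ∈ Set.Ioc (0 : ℝ) 1, ∀ y : ℝ, y ≥ 0 → g x y ≥ 0 →
        g x y - 1 ≥ g x (y - x) ∧ g x (y - x) ≥ 0) := by
  constructor
  · intro N
    refine ⟨1 / (N + 1), ⟨by positivity, by
      rw [div_le_one (by positivity)]; linarith [Nat.cast_nonneg (α := ℝ) N]⟩, ?_⟩
    have h : (N : ℝ) * (1 / (N + 1)) ≤ 1 := by
      rw [mul_one_div, div_le_one (by positivity)]; linarith
    linarith
  · rintro ⟨c, g, hc, h1, h2⟩
    obtain ⟨N, hN⟩ := exists_nat_gt c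
    set x : ℝ := 1 / (N + 1) with hx
    have hxm : x ∈ Set.Ioc (0 : ℝ) 1 := ⟨by positivity, by
      rw [hx, div_le_one (by positivity)]; linarith [Nat.cast_nonneg (α := ℝ) N]⟩
    have key : ∀ k : ℕ, k ≤ N → g x (1 - k * x) ≥ 0 ∧ g x (1 - k * x) ≤ c - 1 - k := by
      intro k
      induction k with
      | zero => intro _; simpa using ⟨(h1 x hxm).2, (h1 x hxm).1⟩
      | succ k ih =>
        intro hk
        obtain ⟨hg0, hgle⟩ := ih (Nat.le_of_succ_le hk)
        have hy : (1 : ℝ) - k * x ≥ 0 := by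
          have : (k : ℝ) * x ≤ 1 := by
            rw [hx, mul_one_div, div_le_one (by positivity)]
            have : (k : ℝ) ≤ N := by exact_mod_cast Nat.le_of_succ_le hk
            linarith
          linarith
        have := h2 x hxm (1 - k * x) hy hg0
        have heq : (1 : ℝ) - k * x - x = 1 - (k + 1 : ℕ) * x := by
          push_cast; ring
        constructor
        · rw [← heq]; exact this.2
        · rw [← heq]; push_cast; linarith [this.1]
    have := key N le_rfl
    linarith [this.1, this.2]
end

section
/- Let G be a reachability game with target set O, let f : S → ℝ satisfy conditions (C1), (C2), (C3) of a ranking certificate, and let σ be any memoryless REACH strategy such that for every REACH-state s with f(s) ≥ 0 and s ∉ O, the successor σ(s) satisfies f(s) − 1 ≥ f(σ(s)) ≥ 0. Then σ is a winning strategy for REACH: every play starting at the initial state and conforming to σ visits O. -/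
/-- Any strategy following a ranking certificate is winning.
Let `f : S → ℝ` satisfy conditions (C1), (C2), (C3) of a ranking certificate and
let `σ` be a memoryless REACH strategy such that for every REACH-state `s` with
`f s ≥ 0` and `s ∉ O`, the chosen successor `σ s` satisfies
`f s - 1 ≥ f (σ s) ≥ 0`. Then `σ` is a winning strategy for REACH: every play
starting at the initial state and conforming to `σ` visits `O`. -/
theorem ranking_strategy_is_winning {S : Type*}
    (isReach : S → Prop) (succ : S → Set S)
    (hsucc : ∀ s, (succ s).Nonempty)
    (init : S) (O : Set S) (f : S → ℝ)
    -- (C1)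
    (hC1 : f init ≥ 0)
    -- (C2)
    (hC2 : ∀ s, ¬ isReach s → s ∉ O → f s ≥ 0 →
      ∀ s' ∈ succ s, f s - 1 ≥ f s' ∧ f s' ≥ 0)
    -- (C3)
    (hC3 : ∀ s, isReach s → s ∉ O → f s ≥ 0 →
      ∃ s' ∈ succ s, f s - 1 ≥ f s' ∧ f s' ≥ 0)
    (σ : S → S)
    -- σ is a memoryless REACH strategy
    (hstrat : ∀ s, isReach s → σ s ∈ succ s)
    -- σ chooses a ranking successor at relevant REACH-states
    (hrank : ∀ s, isReach s → f s ≥ 0 → s ∉ O →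
      f s - 1 ≥ f (σ s) ∧ f (σ s) ≥ 0) :
    ∀ ρ : ℕ → S, ρ 0 = init → (∀ i, ρ (i + 1) ∈ succ (ρ i)) →
      (∀ i, isReach (ρ i) → ρ (i + 1) = σ (ρ i)) →
      ∃ n, ρ n ∈ O := by
  intro ρ h0 hsuc hconf
  by_contra h
  push_neg at h
  have key : ∀ n, f (ρ n) ≥ 0 ∧ f (ρ n) ≤ f init - n := by
    intro n
    induction n with
    | zero => simp [h0]; exact hC1
    | succ n ih =>
      obtain ⟨hge, hle⟩ := ih
      have step : f (ρ n) - 1 ≥ f (ρ (n+1)) ∧ f (ρ (n+1)) ≥ 0 := by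
        by_cases hr : isReach (ρ n)
        · rw [hconf n hr]; exact hrank _ hr hge (h n)
        · exact hC2 _ hr (h n) hge _ (hsuc n)
      refine ⟨step.2, ?_⟩
      push_cast
      linarith [step.1]
  obtain ⟨n, hn⟩ := exists_nat_gt (f init)
  have := key n
  linarith
end

section
/- In the five-bucket Cinderella–Stepmother game with bucket capacity U, for every real U with 0 < U < 2 the Stepmother (the REACH player) has a memoryless winning strategy: there is a strategy for distributing water such that, against every behavior of Cinderella, some bucket eventually exceeds capacity U. -/
/-- A Stepmother move: she distributes one liter of water among the five buckets,
turning bucket contents `b` into `b'` with `b' i ≥ b i` for all `i` and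
`∑ i, (b' i - b i) = 1`. -/
def smMove (b b' : Fin 5 → ℝ) : Prop :=
  (∀ i, b' i ≥ b i) ∧ ∑ i : Fin 5, (b' i - b i) = 1

/-- A Cinderella move: she chooses an index `i` and empties the two adjacent
buckets `i` and `(i + 1) mod 5`, leaving the other three unchanged. -/
def cMove (b b' : Fin 5 → ℝ) : Prop :=
  ∃ i : Fin 5, b' i = 0 ∧ b' (i + 1) = 0 ∧ ∀ j : Fin 5, j ≠ i → j ≠ i + 1 → b' j = b j

/-- Game states: a label (`true` = SM, the Stepmother/REACH label; `false` = C,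
the Cinderella/SAFE label) together with the bucket contents. -/
def cinderellaSucc (s : Bool × (Fin 5 → ℝ)) : Set (Bool × (Fin 5 → ℝ)) :=
  if s.1 then {s' | s'.1 = false ∧ smMove s.2 s'.2}
  else {s' | s'.1 = true ∧ cMove s.2 s'.2}

noncomputable def imax (b : Fin 5 → ℝ) : Fin 5 := (Finite.exists_max b).choose

lemma imax_spec (b : Fin 5 → ℝ) (j : Fin 5) : b j ≤ b (imax b) :=
  (Finite.exists_max b).choose_spec j

lemma fin5_ne1 (i : Fin 5) : i ≠ i + 2 := by revert i; decide

lemma fin5_avoid (i k : Fin 5) : (i ≠ k ∧ i ≠ k + 1) ∨ (i + 2 ≠ k ∧ i + 2 ≠ k + 1) := by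
  revert i k; decide

noncomputable def tval (U : ℝ) (b : Fin 5 → ℝ) : ℝ :=
  if U - 1 < b (imax b) then 1 else max 0 ((1 - (b (imax b) - b (imax b + 2)))/2)

lemma tval_nonneg (U : ℝ) (b : Fin 5 → ℝ) : 0 ≤ tval U b := by
  unfold tval; split
  · norm_num
  · exact le_max_left _ _

lemma tval_le_one (U : ℝ) (b : Fin 5 → ℝ) : tval U b ≤ 1 := by
  unfold tval; split
  · exact le_refl 1
  · have := imax_spec b (imax b + 2)
    apply max_le <;> linarith

noncomputable def sigma (U : ℝ) (b : Fin 5 → ℝ) : Fin 5 → ℝ :=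
  fun j => b j + tval U b * (if j = imax b then 1 else 0)
             + (1 - tval U b) * (if j = imax b + 2 then 1 else 0)

lemma sigma_ge (U : ℝ) (b : Fin 5 → ℝ) (j : Fin 5) : b j ≤ sigma U b j := by
  have h1 := tval_nonneg U b
  have h2 := tval_le_one U b
  unfold sigma
  have i1 : (0:ℝ) ≤ (if j = imax b then (1:ℝ) else 0) := by split <;> norm_num
  have i2 : (0:ℝ) ≤ (if j = imax b + 2 then (1:ℝ) else 0) := by split <;> norm_num
  nlinarith

lemma sigma_smMove (U : ℝ) (b : Fin 5 → ℝ) : smMove b (sigma U b) := by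
  refine ⟨sigma_ge U b, ?_⟩
  have : ∀ j : Fin 5, sigma U b j - b j =
      tval U b * (if j = imax b then 1 else 0)
      + (1 - tval U b) * (if j = imax b + 2 then 1 else 0) := by
    intro j; unfold sigma; ring
  rw [Finset.sum_congr rfl fun j _ => this j]
  rw [Finset.sum_add_distrib, ← Finset.mul_sum, ← Finset.mul_sum]
  simp [Finset.sum_ite_eq']

lemma sigma_val_top (U : ℝ) (b : Fin 5 → ℝ) (h : U - 1 < b (imax b)) :
    sigma U b (imax b) = b (imax b) + 1 := by
  unfold sigma tval
  rw [if_pos h, if_pos rfl, if_neg (fin5_ne1 (imax b))]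
  ring

lemma sigma_val_pair (U : ℝ) (b : Fin 5 → ℝ) (hU : U ≤ 2)
    (hb : 0 ≤ b (imax b + 2)) (h : ¬ U - 1 < b (imax b)) :
    (b (imax b) + 1)/2 ≤ sigma U b (imax b) ∧
    (b (imax b) + 1)/2 ≤ sigma U b (imax b + 2) := by
  have hd0 : b (imax b + 2) ≤ b (imax b) := imax_spec b _
  have hd1 : b (imax b) - b (imax b + 2) ≤ 1 := by push_neg at h; linarith
  have ht : tval U b = (1 - (b (imax b) - b (imax b + 2)))/2 := by
    unfold tval; rw [if_neg h]; exact max_eq_right (by linarith)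
  constructor
  · unfold sigma
    rw [if_pos rfl, if_neg (fin5_ne1 (imax b)), ht]
    linarith
  · unfold sigma
    rw [if_neg (Ne.symm (fin5_ne1 (imax b))), if_pos rfl, ht]
    linarith

/-- In the five-bucket Cinderella–Stepmother game with bucket
capacity `U`, for every real `U` with `0 < U < 2` the Stepmother (the REACH
player) has a memoryless winning strategy: there is a strategy `σ` for
distributing water (a valid Stepmother move at each SM-state) such that every
play from the initial state `(SM, (0,0,0,0,0))` conforming to `σ` — against
every behavior of Cinderella — reaches a target state `(C, b)` with `b i > U`
for some bucket `i`. -/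
theorem stepmother_wins (U : ℝ) (hU0 : 0 < U) (hU2 : U < 2) :
    ∃ σ : (Fin 5 → ℝ) → (Fin 5 → ℝ),
      (∀ b, smMove b (σ b)) ∧
      ∀ ρ : ℕ → Bool × (Fin 5 → ℝ),
        ρ 0 = (true, fun _ => 0) →
        (∀ n, ρ (n + 1) ∈ cinderellaSucc (ρ n)) →
        (∀ n, (ρ n).1 = true → ρ (n + 1) = (false, σ (ρ n).2)) →
        ∃ n, (ρ n).1 = false ∧ ∃ i : Fin 5, (ρ n).2 i > U := by
  refine ⟨sigma U, fun b => sigma_smMove U b, ?_⟩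
  intro ρ h0 hsucc hσ
  have key : ∀ n : ℕ, (∃ k, (ρ k).1 = false ∧ ∃ i, (ρ k).2 i > U) ∨
      ((ρ (2*n)).1 = true ∧ (∀ j, 0 ≤ (ρ (2*n)).2 j) ∧
        1 - (1/2:ℝ)^n ≤ (ρ (2*n)).2 (imax (ρ (2*n)).2)) := by
    intro n
    induction n with
    | zero =>
      right
      rw [show 2*0 = 0 from rfl, h0]
      exact ⟨rfl, fun j => le_refl 0, by norm_num⟩
    | succ n ih =>
      rcases ih with h | ⟨hlab, hnn, hmax⟩
      · exact Or.inl h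
      set b := (ρ (2*n)).2 with hbdef
      have hstep := hσ (2*n) hlab
      by_cases hc : U - 1 < b (imax b)
      · left
        refine ⟨2*n+1, by rw [hstep], imax b, ?_⟩
        rw [hstep]
        show sigma U b (imax b) > U
        rw [sigma_val_top U b hc]
        linarith
      · right
        have e : 2*(n+1) = 2*n+1+1 := by ring
        rw [e]
        have hsucc2 := hsucc (2*n+1)
        rw [hstep] at hsucc2
        have hmem : (ρ (2*n+1+1)).1 = true ∧ cMove (sigma U b) (ρ (2*n+1+1)).2 := by
          simpa [cinderellaSucc] using hsucc2
        obtain ⟨hlab2, k, hk0, hk1, hkeep⟩ := hmem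
        set c := (ρ (2*n+1+1)).2 with hcdef
        have hnn' : ∀ j, 0 ≤ c j := by
          intro j
          by_cases hj1 : j = k
          · rw [hj1, hk0]
          · by_cases hj2 : j = k + 1
            · rw [hj2, hk1]
            · rw [hkeep j hj1 hj2]
              exact le_trans (hnn j) (sigma_ge U b j)
        refine ⟨hlab2, hnn', ?_⟩
        have hpair := sigma_val_pair U b (le_of_lt hU2) (hnn _) hc
        have hpow : ((1:ℝ)/2)^(n+1) = (1/2)^n/2 := by rw [pow_succ]; ring
        have hhalf : 1 - (1/2:ℝ)^(n+1) ≤ (b (imax b) + 1)/2 := by linarith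
        rcases fin5_avoid (imax b) k with ⟨h1, h2⟩ | ⟨h1, h2⟩
        · have hcv : c (imax b) = sigma U b (imax b) := hkeep _ h1 h2
          have := imax_spec c (imax b)
          rw [hcv] at this
          linarith [hpair.1]
        · have hcv : c (imax b + 2) = sigma U b (imax b + 2) := hkeep _ h1 h2
          have := imax_spec c (imax b + 2)
          rw [hcv] at this
          linarith [hpair.2]
  obtain ⟨n, hn⟩ : ∃ n : ℕ, (1/2:ℝ)^n < 2 - U :=
    exists_pow_lt_of_lt_one (by linarith) (by norm_num)
  rcases key n with h | ⟨hlab, hnn, hmax⟩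
  · exact h
  · have hc : U - 1 < (ρ (2*n)).2 (imax (ρ (2*n)).2) := by linarith
    have hstep := hσ (2*n) hlab
    refine ⟨2*n+1, by rw [hstep], imax ((ρ (2*n)).2), ?_⟩
    rw [hstep]
    show sigma U ((ρ (2*n)).2) (imax ((ρ (2*n)).2)) > U
    rw [sigma_val_top _ _ hc]
    linarith
end
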